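/- arXiv:1711.08890 — 4 statements merged into one kernel-verified Lean document; each statement's English description precedes it below -/
import Mathlib

section
/- If G is a connected graph with diameter at most 2, then the edge-connectivity of G equals its minimum degree. -/
/-! Deleting the edges at a vertex of minimum degree disconnects `G`, so `κ' ≤ δ`.
Conversely, let `F` be a set of fewer than `δ` edges and `S` a component of `G - F`. Since
`diam G ≤ 2`, two vertices `a ∈ S`, `b ∉ S` without neighbours on the other side cannot both
exist, so up to swapping `S` and its complement every vertex of `S` has a neighbour outside `S`.
Each vertex of `S` then sends at least `max 1 (δ + 1 - |S|)` edges out of `S`, and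
`|S| * max 1 (δ + 1 - |S|) ≥ δ`; all these edges lie in `F`, a contradiction. -/

open SimpleGraph

/-- The edge-connectivity of `G`: the minimum number of edges whose deletion disconnects `G`. -/
noncomputable def edgeConn {V : Type*} [Fintype V] (G : SimpleGraph V) : ℕ :=
  sInf {k | ∃ F : Finset (Sym2 V), ↑F ⊆ G.edgeSet ∧ F.card = k ∧ ¬ (G.deleteEdges ↑F).Connected}

/-- The minimum degree of `G`. -/
noncomputable def minDeg {V : Type*} [Fintype V] (G : SimpleGraph V) : ℕ :=
  sInf {d | ∃ v : V, d = (G.neighborSet v).ncard}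

open Finset

lemma Nat.le_mul_max_one_add_one_sub {n d : ℕ} (hn : 1 ≤ n) : d ≤ n * max 1 (d + 1 - n) := by
  rcases le_total d n with hdn | hnd
  · exact hdn.trans (Nat.le_mul_of_pos_right n (by omega))
  · obtain ⟨k, rfl⟩ := Nat.exists_eq_add_of_le hnd
    obtain ⟨m, rfl⟩ := Nat.exists_eq_add_of_le hn
    rw [max_eq_right (by omega), show 1 + m + k + 1 - (1 + m) = k + 1 by omega]
    nlinarith

namespace SimpleGraph

variable {V : Type*} (G : SimpleGraph V)

lemma not_connected_deleteEdges_incidenceSet [Nontrivial V] (v : V) :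
    ¬ (G.deleteEdges (G.incidenceSet v)).Connected := by
  intro hconn
  obtain ⟨u, hu⟩ := exists_ne v
  obtain ⟨p⟩ := hconn.preconnected v u
  cases p with
  | nil => exact hu rfl
  | cons h _ =>
    rw [deleteEdges_adj] at h
    exact h.2 ⟨h.1, Sym2.mem_mk_left _ _⟩

section Fintype

variable [Fintype V]

lemma ncard_neighborSet_eq_degree [DecidableRel G.Adj] (v : V) :
    (G.neighborSet v).ncard = G.degree v := by
  rw [Set.ncard_eq_toFinset_card', ← card_neighborSet_eq_degree, Set.toFinset_card]

lemma minDeg_le_degree [DecidableRel G.Adj] (v : V) : minDeg G ≤ G.degree v :=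
  Nat.sInf_le ⟨v, (G.ncard_neighborSet_eq_degree v).symm⟩

lemma exists_degree_eq_minDeg [DecidableRel G.Adj] [Nonempty V] :
    ∃ v, G.degree v = minDeg G := by
  obtain ⟨v, hv⟩ := Nat.sInf_mem (⟨_, Classical.arbitrary V, rfl⟩ :
    {d | ∃ v : V, d = (G.neighborSet v).ncard}.Nonempty)
  exact ⟨v, by rw [minDeg, hv, ncard_neighborSet_eq_degree]⟩

lemma exists_disconnecting_card_eq_degree [DecidableRel G.Adj] [Nontrivial V] (v : V) :
    ∃ F : Finset (Sym2 V),
      ↑F ⊆ G.edgeSet ∧ F.card = G.degree v ∧ ¬ (G.deleteEdges ↑F).Connected := by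
  classical
  exact ⟨G.incidenceFinset v, by simpa [coe_incidenceFinset] using G.incidenceSet_subset v,
    G.card_incidenceFinset_eq_degree v,
    by simpa [coe_incidenceFinset] using G.not_connected_deleteEdges_incidenceSet v⟩

lemma edgeConn_le_degree [DecidableRel G.Adj] [Nontrivial V] (v : V) :
    edgeConn G ≤ G.degree v :=
  Nat.sInf_le (G.exists_disconnecting_card_eq_degree v)

lemma exists_card_eq_edgeConn [Nontrivial V] : ∃ F : Finset (Sym2 V),
    ↑F ⊆ G.edgeSet ∧ F.card = edgeConn G ∧ ¬ (G.deleteEdges ↑F).Connected := by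
  classical
  have hne : {k | ∃ F : Finset (Sym2 V), (F : Set (Sym2 V)) ⊆ G.edgeSet ∧ F.card = k ∧
      ¬ (G.deleteEdges F).Connected}.Nonempty :=
    ⟨_, G.exists_disconnecting_card_eq_degree (Classical.arbitrary V)⟩
  exact Nat.sInf_mem hne

end Fintype

section Interedges

variable {G} [DecidableRel G.Adj]

lemma card_interedges_le_card_of_forall_mem {s t : Finset V} (hst : Disjoint s t)
    {F : Finset (Sym2 V)} (hF : ∀ a ∈ s, ∀ b ∈ t, G.Adj a b → s(a, b) ∈ F) :
    #(G.interedges s t) ≤ #F := by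
  refine card_le_card_of_injOn (fun p ↦ s(p.1, p.2)) (fun p hp ↦ ?_) fun p hp q hq hpq ↦ ?_
  · obtain ⟨hp₁, hp₂, hadj⟩ := G.mem_interedges_iff.1 hp
    exact hF _ hp₁ _ hp₂ hadj
  · obtain ⟨hp₁, -, -⟩ := G.mem_interedges_iff.1 hp
    obtain ⟨-, hq₂, -⟩ := G.mem_interedges_iff.1 hq
    rcases Sym2.eq_iff.1 hpq with ⟨h₁, h₂⟩ | ⟨h₁, -⟩
    · exact Prod.ext h₁ h₂
    · exact absurd (h₁ ▸ hq₂) (Finset.disjoint_left.1 hst hp₁)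

lemma sum_card_filter_adj_eq_card_interedges (s t : Finset V) :
    ∑ a ∈ s, #{b ∈ t | G.Adj a b} = #(G.interedges s t) := by
  simp only [interedges_def, card_filter, sum_product]

lemma card_interedges_comm (s t : Finset V) : #(G.interedges s t) = #(G.interedges t s) :=
  have := G.symm
  Rel.card_interedges_comm s t

variable [Fintype V] [DecidableEq V]

lemma degree_add_one_le_card_filter_adj_compl_add_card {s : Finset V} {a : V} (ha : a ∈ s) :
    G.degree a + 1 ≤ #{b ∈ sᶜ | G.Adj a b} + #s := by
  have hsub : G.neighborFinset a ⊆ s.erase a ∪ {b ∈ sᶜ | G.Adj a b} := by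
    intro b hb
    rw [mem_neighborFinset] at hb
    by_cases hbs : b ∈ s
    · exact mem_union_left _ (mem_erase.2 ⟨hb.ne.symm, hbs⟩)
    · exact mem_union_right _ (mem_filter.2 ⟨mem_compl.2 hbs, hb⟩)
  have := (card_le_card hsub).trans (card_union_le _ _)
  rw [card_neighborFinset_eq_degree, card_erase_of_mem ha] at this
  have := card_pos.2 ⟨a, ha⟩
  omega

lemma le_card_interedges_compl {s : Finset V} (hs : s.Nonempty) {d : ℕ}
    (hd : ∀ a ∈ s, d ≤ G.degree a) (hout : ∀ a ∈ s, ∃ b ∉ s, G.Adj a b) :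
    d ≤ #(G.interedges s sᶜ) := by
  have hterm (a : V) (ha : a ∈ s) : max 1 (d + 1 - #s) ≤ #{b ∈ sᶜ | G.Adj a b} := by
    obtain ⟨b, hb, hab⟩ := hout a ha
    have hpos : 0 < #{b ∈ sᶜ | G.Adj a b} :=
      card_pos.2 ⟨b, mem_filter.2 ⟨mem_compl.2 hb, hab⟩⟩
    have hdeg := G.degree_add_one_le_card_filter_adj_compl_add_card ha
    have hda := hd a ha
    omega
  calc d ≤ #s * max 1 (d + 1 - #s) := Nat.le_mul_max_one_add_one_sub hs.card_pos
    _ = ∑ _a ∈ s, max 1 (d + 1 - #s) := by rw [sum_const, smul_eq_mul]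
    _ ≤ ∑ a ∈ s, #{b ∈ sᶜ | G.Adj a b} := sum_le_sum hterm
    _ = #(G.interedges s sᶜ) := sum_card_filter_adj_eq_card_interedges s sᶜ

end Interedges

variable {G}

lemma Connected.adj_or_exists_adj_adj_of_dist_le_two (hG : G.Connected) {u v : V}
    (huv : u ≠ v) (hdist : G.dist u v ≤ 2) : G.Adj u v ∨ ∃ w, G.Adj u w ∧ G.Adj w v := by
  by_contra! h
  have hcommon : G.commonNeighbors u v = ∅ :=
    Set.eq_empty_of_forall_notMem fun w hw ↦ h.2 w hw.1 (G.adj_symm hw.2)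
  have htwo := two_lt_edist_iff.2 ⟨huv, h.1, hcommon⟩
  rw [← (hG u v).coe_dist_eq_edist] at htwo
  norm_cast at htwo
  omega

lemma Connected.forall_exists_adj_notMem_or (hG : G.Connected)
    (hdiam : ∀ u v : V, G.dist u v ≤ 2) (s : Set V) :
    (∀ a ∈ s, ∃ b ∉ s, G.Adj a b) ∨ ∀ b ∉ s, ∃ a ∈ s, G.Adj b a := by
  by_contra! h
  obtain ⟨⟨a, ha, hain⟩, ⟨b, hb, hbout⟩⟩ := h
  have hab : a ≠ b := by rintro rfl; exact hb ha
  rcases hG.adj_or_exists_adj_adj_of_dist_le_two hab (hdiam a b) with hadj | ⟨w, haw, hwb⟩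
  · exact hain b hb hadj
  · by_cases hw : w ∈ s
    · exact hbout w hw hwb.symm
    · exact hain w hw haw

variable [Fintype V]

lemma Connected.minDeg_le_card_interedges_compl [DecidableEq V] [DecidableRel G.Adj]
    (hG : G.Connected) (hdiam : ∀ u v : V, G.dist u v ≤ 2) {s : Finset V}
    (hs : s.Nonempty) (hsc : sᶜ.Nonempty) : minDeg G ≤ #(G.interedges s sᶜ) := by
  rcases hG.forall_exists_adj_notMem_or hdiam s with hout | hin
  · exact le_card_interedges_compl hs (fun a _ ↦ G.minDeg_le_degree a) hout
  · have := le_card_interedges_compl hsc (fun a _ ↦ G.minDeg_le_degree a) fun b hb ↦ by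
      simpa using hin b (mem_compl.1 hb)
    rwa [compl_compl, card_interedges_comm] at this

lemma Connected.connected_deleteEdges_of_card_lt_minDeg (hG : G.Connected)
    (hdiam : ∀ u v : V, G.dist u v ≤ 2) {F : Finset (Sym2 V)} (hF : #F < minDeg G) :
    (G.deleteEdges F).Connected := by
  classical
  refine (connected_iff _).2 ⟨fun u v ↦ ?_, hG.nonempty⟩
  by_contra huv
  let s : Finset V := {x | (G.deleteEdges F).Reachable u x}
  have hcut : ∀ a ∈ s, ∀ b ∈ sᶜ, G.Adj a b → s(a, b) ∈ F := by
    intro a ha b hb hab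
    by_contra habF
    simp only [s, mem_compl, mem_filter, mem_univ, true_and] at ha hb
    exact hb (ha.trans (deleteEdges_adj.2 ⟨hab, habF⟩).reachable)
  have hlower :=
    hG.minDeg_le_card_interedges_compl hdiam (s := s) ⟨u, by simp [s]⟩ ⟨v, by simpa [s]⟩
  have hupper := card_interedges_le_card_of_forall_mem disjoint_compl_right hcut
  omega

end SimpleGraph

/-- Plesník: a connected graph of diameter at most 2 has edge-connectivity equal to
its minimum degree. -/
theorem diam_le_two_edgeConn_eq_minDeg {V : Type*} [Fintype V] (G : SimpleGraph V)
    (hG : G.Connected) (hcard : 2 ≤ Fintype.card V)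
    (hdiam : ∀ u v : V, G.dist u v ≤ 2) :
    edgeConn G = minDeg G := by
  classical
  have : Nontrivial V := Fintype.one_lt_card_iff_nontrivial.mp hcard
  obtain ⟨v, hv⟩ := G.exists_degree_eq_minDeg
  refine le_antisymm (hv ▸ G.edgeConn_le_degree v) ?_
  obtain ⟨F, -, hF, hdisc⟩ := G.exists_card_eq_edgeConn
  by_contra! hlt
  exact hdisc (hG.connected_deleteEdges_of_card_lt_minDeg hdiam (hF ▸ hlt))
end

section
/- If G is a connected graph on n vertices with n ≤ 2δ(G) + 1, then the edge-connectivity of G equals its minimum degree. -/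
/-!
Deleting the edges at a vertex of minimum degree disconnects `G`, so `κ'(G) ≤ δ(G)`. Conversely,
if fewer than `δ` edges leave a nonempty vertex set `S`, then every vertex of `S` has at least `δ`
neighbours, at most `|S| - 1` of them inside `S`, so `|S| δ ≤ |S| (|S| - 1) + (edges leaving S)
< |S| (|S| - 1) + δ`, which forces `|S| > δ`. If fewer than `δ` edges disconnected `G`, both a
component and its complement would have more than `δ` vertices, contradicting `n ≤ 2δ + 1`.
-/

open SimpleGraph

open Finset

namespace SimpleGraph

variable {V : Type*} {G : SimpleGraph V}

lemma not_connected_deleteIncidenceSet [Nontrivial V] (G : SimpleGraph V) (v : V) :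
    ¬ (G.deleteIncidenceSet v).Connected := fun h ↦
  h.preconnected.not_isIsolated v fun _ hvw ↦ (deleteIncidenceSet_adj.1 hvw).2.1 rfl

lemma card_interedges_le_of_forall_adj_mem [DecidableRel G.Adj] {s t : Finset V}
    {F : Finset (Sym2 V)} (hst : Disjoint s t) (hF : ∀ a ∈ s, ∀ b ∈ t, G.Adj a b → s(a, b) ∈ F) :
    #(G.interedges s t) ≤ #F := by
  refine card_le_card_of_injOn (fun e ↦ s(e.1, e.2)) (fun e he ↦ ?_) ?_
  · rw [mem_coe, mem_interedges_iff] at he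
    exact hF _ he.1 _ he.2.1 he.2.2
  · rintro ⟨a, b⟩ hab ⟨c, d⟩ hcd heq
    rw [mem_coe, mk_mem_interedges_iff] at hab hcd
    rcases Sym2.eq_iff.1 heq with ⟨rfl, rfl⟩ | ⟨rfl, rfl⟩
    · rfl
    · exact absurd hcd.2.1 (Finset.disjoint_left.1 hst hab.1)

lemma card_interedges_eq_sum [DecidableRel G.Adj] (s t : Finset V) :
    #(G.interedges s t) = ∑ a ∈ s, #{b ∈ t | G.Adj a b} := by
  simp only [interedges_def, card_filter, sum_product]

variable [Fintype V]

lemma minDeg_eq_minDegree (G : SimpleGraph V) [DecidableRel G.Adj] : minDeg G = G.minDegree := by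
  have hncard (v : V) : (G.neighborSet v).ncard = G.degree v := by
    rw [← Nat.card_coe_set_eq, Nat.card_eq_fintype_card, card_neighborSet_eq_degree]
  cases isEmpty_or_nonempty V
  · simp [minDeg, minDegree_of_subsingleton]
  obtain ⟨v, hv⟩ := G.exists_minimal_degree_vertex
  refine le_antisymm (Nat.sInf_le ⟨v, by rw [hv, hncard]⟩) (le_csInf ⟨_, v, rfl⟩ ?_)
  rintro _ ⟨w, rfl⟩
  exact hncard w ▸ G.minDegree_le_degree w

variable [DecidableEq V] [DecidableRel G.Adj]

lemma degree_le_card_sub_one_add {s : Finset V} {a : V} (ha : a ∈ s) :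
    G.degree a ≤ #s - 1 + #{b ∈ sᶜ | G.Adj a b} := by
  have hsub : G.neighborFinset a ⊆ s.erase a ∪ {b ∈ sᶜ | G.Adj a b} := by
    intro b hb
    rw [mem_neighborFinset] at hb
    by_cases hbs : b ∈ s
    · exact mem_union_left _ (mem_erase.2 ⟨hb.ne.symm, hbs⟩)
    · exact mem_union_right _ (mem_filter.2 ⟨mem_compl.2 hbs, hb⟩)
  calc G.degree a = #(G.neighborFinset a) := (card_neighborFinset_eq_degree G a).symm
    _ ≤ #(s.erase a ∪ {b ∈ sᶜ | G.Adj a b}) := card_le_card hsub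
    _ ≤ #(s.erase a) + #{b ∈ sᶜ | G.Adj a b} := card_union_le _ _
    _ = #s - 1 + #{b ∈ sᶜ | G.Adj a b} := by rw [card_erase_of_mem ha]

lemma minDegree_lt_card_of_card_interedges_lt {s : Finset V} (hs : s.Nonempty)
    (hcut : #(G.interedges s sᶜ) < G.minDegree) : G.minDegree < #s := by
  set δ := G.minDegree
  by_contra! hsδ
  have hdeg : #s * δ ≤ #s * (#s - 1) + #(G.interedges s sᶜ) :=
    calc #s * δ = ∑ _a ∈ s, δ := by rw [sum_const, smul_eq_mul]
      _ ≤ ∑ a ∈ s, G.degree a := sum_le_sum fun a _ ↦ G.minDegree_le_degree a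
      _ ≤ ∑ a ∈ s, (#s - 1 + #{b ∈ sᶜ | G.Adj a b}) :=
          sum_le_sum fun a ha ↦ degree_le_card_sub_one_add ha
      _ = #s * (#s - 1) + #(G.interedges s sᶜ) := by
          rw [sum_add_distrib, sum_const, smul_eq_mul, card_interedges_eq_sum]
  obtain ⟨k, hk⟩ : ∃ k, #s = k + 1 := Nat.exists_eq_add_one_of_ne_zero hs.card_pos.ne'
  rw [hk, Nat.add_sub_cancel] at hdeg
  rw [hk] at hsδ
  nlinarith

lemma minDegree_le_card_of_not_connected_deleteEdges
    (h : Fintype.card V ≤ 2 * G.minDegree + 1) {F : Finset (Sym2 V)}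
    (hF : ¬ (G.deleteEdges ↑F).Connected) : G.minDegree ≤ #F := by
  cases isEmpty_or_nonempty V
  · simp [minDegree_of_subsingleton]
  obtain ⟨a, b, hab⟩ : ∃ a b, ¬ (G.deleteEdges ↑F).Reachable a b := by
    by_contra! hpre
    exact hF ⟨hpre⟩
  set s : Finset V := {u | (G.deleteEdges ↑F).Reachable a u}
  have hcut : ∀ x ∈ s, ∀ y ∈ sᶜ, G.Adj x y → s(x, y) ∈ F := by
    intro x hx y hy hxy
    by_contra hxyF
    simp only [s, mem_compl, mem_filter, mem_univ, true_and] at hx hy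
    exact hy (hx.trans (deleteEdges_adj.2 ⟨hxy, hxyF⟩).reachable)
  by_contra! hFδ
  have hs : G.minDegree < #s := minDegree_lt_card_of_card_interedges_lt ⟨a, by simp [s]⟩
    ((card_interedges_le_of_forall_adj_mem disjoint_compl_right hcut).trans_lt hFδ)
  have hsc : G.minDegree < #sᶜ := minDegree_lt_card_of_card_interedges_lt ⟨b, by simp [s, hab]⟩
    ((card_interedges_le_of_forall_adj_mem disjoint_compl_right (by
      rw [compl_compl]
      exact fun x hx y hy hxy ↦ Sym2.eq_swap ▸ hcut y hy x hx hxy.symm)).trans_lt hFδ)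
  have := card_add_card_compl s
  omega

end SimpleGraph

theorem chartrand_edgeConn_eq_minDeg_general {V : Type*} [Fintype V] (G : SimpleGraph V)
    (hcard : 2 ≤ Fintype.card V)
    (h : Fintype.card V ≤ 2 * minDeg G + 1) :
    edgeConn G = minDeg G := by
  classical
  have : Nontrivial V := Fintype.one_lt_card_iff_nontrivial.1 hcard
  rw [minDeg_eq_minDegree] at h ⊢
  obtain ⟨v, hv⟩ := G.exists_minimal_degree_vertex
  have hstar : G.minDegree ∈ {k | ∃ F : Finset (Sym2 V),
      ↑F ⊆ G.edgeSet ∧ #F = k ∧ ¬ (G.deleteEdges ↑F).Connected} :=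
    ⟨G.incidenceFinset v, by simpa using G.incidenceSet_subset v,
      by rw [card_incidenceFinset_eq_degree, hv],
      by rw [coe_incidenceFinset]; exact G.not_connected_deleteIncidenceSet v⟩
  refine le_antisymm (Nat.sInf_le hstar) (le_csInf ⟨_, hstar⟩ ?_)
  rintro _ ⟨F, -, rfl, hF⟩
  exact minDegree_le_card_of_not_connected_deleteEdges h hF

/-- Chartrand: if `n ≤ 2δ(G) + 1` then `κ'(G) = δ(G)`. -/
theorem chartrand_edgeConn_eq_minDeg {V : Type*} [Fintype V] (G : SimpleGraph V)
    (hG : G.Connected) (hcard : 2 ≤ Fintype.card V)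
    (h : Fintype.card V ≤ 2 * minDeg G + 1) :
    edgeConn G = minDeg G :=
  chartrand_edgeConn_eq_minDeg_general G hcard h
end

section
/- Let G be a connected graph with κ'(G) < δ(G), let M be a minimum edge cut, and let G₁ be one of the two components of G − M with S₁ the set of endpoints of M in G₁. Then the number of edges of G₁ is strictly greater than |S₁|(|S₁| − 1)/2; consequently G₁ has a vertex outside S₁. -/
open SimpleGraph

private lemma reach_closed {V : Type*} (H : SimpleGraph V) (A : Set V)
    (h : ∀ x y : V, H.Adj x y → (x ∈ A ↔ y ∈ A)) :
    ∀ x y : V, H.Reachable x y → (x ∈ A ↔ y ∈ A) := by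
  intro x y hr
  obtain ⟨w⟩ := hr
  induction w with
  | nil => rfl
  | cons hadj p ih => exact (h _ _ hadj).trans ih

/-- Claim 1 (edge count): if `M` is a minimum edge cut of `G` with `κ'(G) < δ(G)`,
`A` is the vertex set of one of the two components of `G - M`, and `S₁` the endpoints of
`M` in `A`, then the component on `A` has more than `|S₁|(|S₁|-1)/2` edges, and hence
has a vertex outside `S₁`. -/
theorem claim1_edge_count {V : Type*} [Fintype V] (G : SimpleGraph V)
    (hG : G.Connected) (hlt : edgeConn G < minDeg G)
    (M : Finset (Sym2 V)) (hM : ↑M ⊆ G.edgeSet) (hMcard : M.card = edgeConn G)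
    (A : Set V) (hA : A.Nonempty) (hAc : Aᶜ.Nonempty)
    (hcomp : ∀ x y : V, (G.deleteEdges ↑M).Reachable x y ↔ (x ∈ A ↔ y ∈ A)) :
    (({v | v ∈ A ∧ ∃ e ∈ M, v ∈ e} : Set V).ncard *
        (({v | v ∈ A ∧ ∃ e ∈ M, v ∈ e} : Set V).ncard - 1)) / 2 <
      ({e ∈ G.edgeSet | ∀ v ∈ e, v ∈ A} : Set (Sym2 V)).ncard ∧
    (A \ {v | v ∈ A ∧ ∃ e ∈ M, v ∈ e}).Nonempty := by
  classical
  -- cross-edge fact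
  have hcross_edge : ∀ x y : V, x ∈ A → y ∉ A → G.Adj x y → s(x, y) ∈ M := by
    intro x y hx hy hadj
    by_contra hne
    have hadj' : (G.deleteEdges ↑M).Adj x y := by
      rw [SimpleGraph.deleteEdges_adj]
      exact ⟨hadj, by simpa using hne⟩
    exact hy (((hcomp x y).mp hadj'.reachable).mp hx)
  -- key: no edge of M has both endpoints on the same side
  have key : ∀ a b : V, s(a, b) ∈ M → (a ∈ A ↔ b ∈ A) → False := by
    intro a b he hab
    have hclosed : ∀ x y : V, (G.deleteEdges ↑(M.erase s(a, b))).Adj x y → (x ∈ A ↔ y ∈ A) := by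
      intro x y hxy
      rw [SimpleGraph.deleteEdges_adj] at hxy
      obtain ⟨hxyG, hnotin⟩ := hxy
      by_cases hmem : s(x, y) ∈ M
      · have heq : s(x, y) = s(a, b) := by
          by_contra hq
          exact hnotin (Finset.mem_coe.mpr (Finset.mem_erase.mpr ⟨hq, hmem⟩))
        rw [Sym2.eq_iff] at heq
        rcases heq with ⟨rfl, rfl⟩ | ⟨rfl, rfl⟩
        · exact hab
        · exact hab.symm
      · refine (hcomp x y).mp ?_
        have hadjM : (G.deleteEdges ↑M).Adj x y := by
          rw [SimpleGraph.deleteEdges_adj]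
          exact ⟨hxyG, by simpa using hmem⟩
        exact hadjM.reachable
    have hndis : ¬ (G.deleteEdges ↑(M.erase s(a, b))).Connected := by
      intro hc
      obtain ⟨u, hu⟩ := hA
      obtain ⟨w, hw⟩ := hAc
      exact hw ((reach_closed _ A hclosed u w (hc.preconnected u w)).mp hu)
    have hle : edgeConn G ≤ (M.erase s(a, b)).card := by
      apply Nat.sInf_le
      exact ⟨M.erase s(a, b),
        Set.Subset.trans (Finset.coe_subset.mpr (Finset.erase_subset _ _)) hM, rfl, hndis⟩
    have hcard : (M.erase s(a, b)).card = M.card - 1 := Finset.card_erase_of_mem he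
    have hpos : 0 < M.card := Finset.card_pos.mpr ⟨_, he⟩
    omega
  -- crossing structure of M
  have hcross : ∀ e ∈ M, ∃ a b : V, a ∈ A ∧ b ∉ A ∧ e = s(a, b) := by
    intro e he
    induction e with
    | h a b =>
      have hadj : G.Adj a b := (G.mem_edgeSet).mp (hM he)
      by_cases ha : a ∈ A
      · by_cases hb : b ∈ A
        · exact (key a b he (iff_of_true ha hb)).elim
        · exact ⟨a, b, ha, hb, rfl⟩
      · by_cases hb : b ∈ A
        · exact ⟨b, a, hb, ha, Sym2.eq_swap⟩
        · exact (key a b he (iff_of_false ha hb)).elim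
  set Sf : Finset V := Finset.univ.filter (fun v => v ∈ A ∧ ∃ e ∈ M, v ∈ e) with hSfdef
  set Ef : Finset (Sym2 V) := G.edgeFinset.filter (fun e => ∀ v ∈ e, v ∈ A) with hEfdef
  have hSfmem : ∀ v : V, v ∈ Sf ↔ v ∈ A ∧ ∃ e ∈ M, v ∈ e := by
    intro v; simp [hSfdef]
  have hEfmem : ∀ e : Sym2 V, e ∈ Ef ↔ e ∈ G.edgeSet ∧ ∀ v ∈ e, v ∈ A := by
    intro e; simp [hEfdef]
  -- each edge of M meets Sf in exactly one vertex
  have hM1 : ∀ e ∈ M, (Sf.filter (fun v => v ∈ e)).card = 1 := by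
    intro e he
    obtain ⟨a, b, ha, hb, rfl⟩ := hcross e he
    have heq : Sf.filter (fun v => v ∈ s(a, b)) = {a} := by
      ext x
      simp only [Finset.mem_filter, Finset.mem_singleton, Sym2.mem_iff]
      constructor
      · rintro ⟨hxS, rfl | rfl⟩
        · rfl
        · exact absurd ((hSfmem x).mp hxS).1 hb
      · rintro rfl
        exact ⟨(hSfmem _).mpr ⟨ha, _, he, Sym2.mem_mk_left _ b⟩, Or.inl rfl⟩
    rw [heq, Finset.card_singleton]
  -- |Sf| ≤ |M|
  have hsk : Sf.card ≤ M.card := by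
    have hsub : Sf ⊆ M.biUnion (fun e => Sf.filter (fun v => v ∈ e)) := by
      intro v hv
      obtain ⟨hvA, e, he, hve⟩ := (hSfmem v).mp hv
      exact Finset.mem_biUnion.mpr ⟨e, he, Finset.mem_filter.mpr ⟨hv, hve⟩⟩
    calc Sf.card ≤ (M.biUnion (fun e => Sf.filter (fun v => v ∈ e))).card :=
          Finset.card_le_card hsub
      _ ≤ ∑ e ∈ M, (Sf.filter (fun v => v ∈ e)).card := Finset.card_biUnion_le
      _ = ∑ e ∈ M, 1 := Finset.sum_congr rfl hM1
      _ = M.card := by simp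
  -- M nonempty, hence Sf nonempty
  have hMne : M.Nonempty := by
    rcases M.eq_empty_or_nonempty with h | h
    · exfalso
      obtain ⟨u, hu⟩ := hA
      obtain ⟨w, hw⟩ := hAc
      have hr : (G.deleteEdges ↑M).Reachable u w := by
        subst h; simpa using hG.preconnected u w
      exact hw (((hcomp u w).mp hr).mp hu)
    · exact h
  have hs1 : 1 ≤ Sf.card := by
    obtain ⟨e, he⟩ := hMne
    obtain ⟨a, b, ha, hb, rfl⟩ := hcross e he
    exact Finset.card_pos.mpr ⟨a, (hSfmem a).mpr ⟨ha, s(a, b), he, Sym2.mem_mk_left a b⟩⟩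
  -- degree lower bound at each vertex of Sf
  have hdeg : ∀ v ∈ Sf, minDeg G ≤ (Ef.filter (fun e => v ∈ e)).card
      + (M.filter (fun e => v ∈ e)).card := by
    intro v hv
    obtain ⟨hvA, -⟩ := (hSfmem v).mp hv
    have h1 : minDeg G ≤ G.degree v := by
      have hle : minDeg G ≤ (G.neighborSet v).ncard := Nat.sInf_le ⟨v, rfl⟩
      have : (G.neighborSet v).ncard = G.degree v := by
        rw [← Nat.card_coe_set_eq, Nat.card_eq_fintype_card,
          SimpleGraph.card_neighborSet_eq_degree]
      omega
    have h2 : G.incidenceFinset v ⊆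
        Ef.filter (fun e => v ∈ e) ∪ M.filter (fun e => v ∈ e) := by
      intro e heI
      rw [SimpleGraph.mem_incidenceFinset] at heI
      obtain ⟨heE, hve⟩ := heI
      by_cases hem : e ∈ M
      · exact Finset.mem_union_right _ (Finset.mem_filter.mpr ⟨hem, hve⟩)
      · refine Finset.mem_union_left _ (Finset.mem_filter.mpr ⟨?_, hve⟩)
        refine (hEfmem e).mpr ⟨heE, ?_⟩
        intro w hwe
        by_contra hwA
        have hwv : v ≠ w := fun h => hwA (h ▸ hvA)
        have heq : e = s(v, w) := (Sym2.mem_and_mem_iff hwv).mp ⟨hve, hwe⟩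
        have hadj : G.Adj v w := (G.mem_edgeSet).mp (heq ▸ heE)
        exact hem (heq ▸ hcross_edge v w hvA hwA hadj)
    calc minDeg G ≤ G.degree v := h1
      _ = (G.incidenceFinset v).card := (SimpleGraph.card_incidenceFinset_eq_degree G v).symm
      _ ≤ (Ef.filter (fun e => v ∈ e) ∪ M.filter (fun e => v ∈ e)).card :=
          Finset.card_le_card h2
      _ ≤ _ := Finset.card_union_le _ _
  -- double counting sums
  have hsum1 : ∑ v ∈ Sf, (M.filter (fun e => v ∈ e)).card = M.card := by
    calc ∑ v ∈ Sf, (M.filter (fun e => v ∈ e)).card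
        = ∑ v ∈ Sf, ∑ e ∈ M, if v ∈ e then 1 else 0 := by
          simp only [Finset.card_filter]
      _ = ∑ e ∈ M, ∑ v ∈ Sf, if v ∈ e then 1 else 0 := Finset.sum_comm
      _ = ∑ e ∈ M, (Sf.filter (fun v => v ∈ e)).card := by
          simp only [Finset.card_filter]
      _ = ∑ e ∈ M, 1 := Finset.sum_congr rfl hM1
      _ = M.card := by simp
  have hswap2 : ∑ v ∈ Sf, (Ef.filter (fun e => v ∈ e)).card
      = ∑ e ∈ Ef, (Sf.filter (fun v => v ∈ e)).card := by
    calc ∑ v ∈ Sf, (Ef.filter (fun e => v ∈ e)).card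
        = ∑ v ∈ Sf, ∑ e ∈ Ef, if v ∈ e then 1 else 0 := by
          simp only [Finset.card_filter]
      _ = ∑ e ∈ Ef, ∑ v ∈ Sf, if v ∈ e then 1 else 0 := Finset.sum_comm
      _ = ∑ e ∈ Ef, (Sf.filter (fun v => v ∈ e)).card := by
          simp only [Finset.card_filter]
  have hsum2 : ∑ v ∈ Sf, (Ef.filter (fun e => v ∈ e)).card ≤ 2 * Ef.card := by
    rw [hswap2]
    calc ∑ e ∈ Ef, (Sf.filter (fun v => v ∈ e)).card ≤ ∑ _e ∈ Ef, 2 := by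
          refine Finset.sum_le_sum (fun e _ => ?_)
          induction e with
          | h a b =>
            have hsub : Sf.filter (fun v => v ∈ s(a, b)) ⊆ {a, b} := by
              intro x hx
              have := (Finset.mem_filter.mp hx).2
              rw [Sym2.mem_iff] at this
              simpa using this
            calc (Sf.filter (fun v => v ∈ s(a, b))).card ≤ ({a, b} : Finset V).card :=
                  Finset.card_le_card hsub
              _ ≤ 2 := Finset.card_insert_le a {b} |>.trans (by simp)
      _ = 2 * Ef.card := by rw [Finset.sum_const, smul_eq_mul, mul_comm]
  -- combine
  have hmain : Sf.card * minDeg G ≤ 2 * Ef.card + M.card := by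
    calc Sf.card * minDeg G = ∑ _v ∈ Sf, minDeg G := by
          rw [Finset.sum_const, smul_eq_mul]
      _ ≤ ∑ v ∈ Sf, ((Ef.filter (fun e => v ∈ e)).card + (M.filter (fun e => v ∈ e)).card) :=
          Finset.sum_le_sum hdeg
      _ = (∑ v ∈ Sf, (Ef.filter (fun e => v ∈ e)).card)
            + ∑ v ∈ Sf, (M.filter (fun e => v ∈ e)).card := Finset.sum_add_distrib
      _ ≤ 2 * Ef.card + M.card := add_le_add hsum2 hsum1.le
  have hdlb : M.card + 1 ≤ minDeg G := by omega
  have harith : Sf.card * (Sf.card - 1) < 2 * Ef.card := by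
    obtain ⟨t, ht⟩ : ∃ t, Sf.card = t + 1 := ⟨Sf.card - 1, by omega⟩
    obtain ⟨u, hk⟩ : ∃ u, M.card = t + 1 + u := ⟨M.card - (t + 1), by omega⟩
    rw [ht] at hmain
    have h1 : (t + 1) * (M.card + 1) ≤ 2 * Ef.card + M.card :=
      le_trans (Nat.mul_le_mul_left _ hdlb) hmain
    rw [ht]
    simp only [Nat.add_sub_cancel]
    nlinarith [h1, hk]
  have hSset : ({v | v ∈ A ∧ ∃ e ∈ M, v ∈ e} : Set V) = ↑Sf := by
    ext v; simpa using (hSfmem v).symm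
  have hEset : ({e ∈ G.edgeSet | ∀ v ∈ e, v ∈ A} : Set (Sym2 V)) = ↑Ef := by
    ext e; simpa using (hEfmem e).symm
  constructor
  · rw [hSset, hEset, Set.ncard_coe_finset, Set.ncard_coe_finset]
    rw [Nat.div_lt_iff_lt_mul (by norm_num : 0 < 2)]
    linarith [harith]
  · by_contra hno
    rw [Set.not_nonempty_iff_eq_empty, Set.diff_eq_empty] at hno
    have hAS : ∀ w : V, w ∈ A → w ∈ Sf := fun w hw => (hSfmem w).mpr (hno hw)
    have hvb : ∀ v ∈ Sf, (Ef.filter (fun e => v ∈ e)).card ≤ Sf.card - 1 := by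
      intro v hv
      have hmap : ∀ e ∈ Ef.filter (fun e => v ∈ e),
          (fun e => if h : v ∈ e then Sym2.Mem.other h else v) e ∈ Sf.erase v := by
        intro e he
        obtain ⟨heEf, hve⟩ := Finset.mem_filter.mp he
        obtain ⟨heE, hall⟩ := (hEfmem e).mp heEf
        simp only [dif_pos hve]
        have hother : Sym2.Mem.other hve ∈ e := Sym2.other_mem hve
        have hspec : s(v, Sym2.Mem.other hve) = e := Sym2.other_spec hve
        have hadj : G.Adj v (Sym2.Mem.other hve) := by rw [← G.mem_edgeSet, hspec]; exact heE
        exact Finset.mem_erase.mpr ⟨hadj.ne', hAS _ (hall _ hother)⟩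
      have hinj : ∀ e₁ ∈ Ef.filter (fun e => v ∈ e), ∀ e₂ ∈ Ef.filter (fun e => v ∈ e),
          (fun e => if h : v ∈ e then Sym2.Mem.other h else v) e₁ =
          (fun e => if h : v ∈ e then Sym2.Mem.other h else v) e₂ → e₁ = e₂ := by
        intro e₁ h₁ e₂ h₂ heq
        have hv₁ : v ∈ e₁ := (Finset.mem_filter.mp h₁).2
        have hv₂ : v ∈ e₂ := (Finset.mem_filter.mp h₂).2
        simp only [dif_pos hv₁, dif_pos hv₂] at heq
        rw [← Sym2.other_spec hv₁, ← Sym2.other_spec hv₂, heq]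
      calc (Ef.filter (fun e => v ∈ e)).card ≤ (Sf.erase v).card :=
            Finset.card_le_card_of_injOn _ hmap hinj
        _ = Sf.card - 1 := Finset.card_erase_of_mem hv
    have hlb : 2 * Ef.card ≤ ∑ v ∈ Sf, (Ef.filter (fun e => v ∈ e)).card := by
      rw [hswap2]
      have hper : ∀ e ∈ Ef, 2 ≤ (Sf.filter (fun v => v ∈ e)).card := by
        intro e he
        obtain ⟨heE, hall⟩ := (hEfmem e).mp he
        induction e with
        | h a b =>
          have hadj : G.Adj a b := (G.mem_edgeSet).mp heE
          have hsub : ({a, b} : Finset V) ⊆ Sf.filter (fun v => v ∈ s(a, b)) := by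
            intro x hx
            simp only [Finset.mem_insert, Finset.mem_singleton] at hx
            rcases hx with rfl | rfl
            · exact Finset.mem_filter.mpr
                ⟨hAS _ (hall _ (Sym2.mem_mk_left _ _)), Sym2.mem_mk_left _ _⟩
            · exact Finset.mem_filter.mpr
                ⟨hAS _ (hall _ (Sym2.mem_mk_right _ _)), Sym2.mem_mk_right _ _⟩
          calc 2 = ({a, b} : Finset V).card := by
                rw [Finset.card_insert_of_notMem (by simp [hadj.ne]), Finset.card_singleton]
            _ ≤ _ := Finset.card_le_card hsub
      calc 2 * Ef.card = ∑ _e ∈ Ef, 2 := by rw [Finset.sum_const, smul_eq_mul, mul_comm]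
        _ ≤ _ := Finset.sum_le_sum hper
    have hub : 2 * Ef.card ≤ Sf.card * (Sf.card - 1) := by
      calc 2 * Ef.card ≤ ∑ v ∈ Sf, (Ef.filter (fun e => v ∈ e)).card := hlb
        _ ≤ ∑ _v ∈ Sf, (Sf.card - 1) := Finset.sum_le_sum hvb
        _ = Sf.card * (Sf.card - 1) := by rw [Finset.sum_const, smul_eq_mul]
    exact absurd hub (not_le.mpr harith)
end

section
/- Every connected graph in which every induced path has at most 3 vertices (P₄-free) and which has at least 2 vertices satisfies: for any nonempty proper vertex subset A, the number of edges between A and its complement is at least δ(G). -/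
open SimpleGraph

/-!
An edge `xy` of the cut (`x ∈ A`, `y ∉ A`) exists by connectivity. If every neighbour of `x`
inside `A` has a neighbour outside `A`, then sending each neighbour `u` of `x` to `xu` (when
`u ∉ A`) or to some cut edge at `u` (when `u ∈ A`) injects `N(x)` into the cut, so the cut has at
least `deg x ≥ δ(G)` edges; symmetrically for `y` and the complement of `A`. If both fail, there
are `x' ∈ A` adjacent to `x` with no neighbour outside `A` and `y' ∉ A` adjacent to `y` with no
neighbour in `A`, and `x' x y y'` is an induced `P₄`.
-/

namespace SimpleGraph

variable {V : Type*} (G : SimpleGraph V)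

def cutEdges (A : Set V) : Set (Sym2 V) :=
  {e ∈ G.edgeSet | ∃ x ∈ A, ∃ y ∉ A, e = s(x, y)}

variable {G}

theorem cutEdges_compl (A : Set V) : G.cutEdges Aᶜ = G.cutEdges A := by
  ext e
  simp only [cutEdges, Set.mem_ofPred_eq, Set.mem_compl_iff, not_not]
  constructor <;> rintro ⟨he, x, hx, y, hy, rfl⟩ <;> exact ⟨he, y, hy, x, hx, Sym2.eq_swap⟩

theorem Connected.exists_adj_mem_notMem (hG : G.Connected) {A : Set V} (hA : A.Nonempty)
    (hAne : A ≠ Set.univ) : ∃ x ∈ A, ∃ y ∉ A, G.Adj x y := by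
  obtain ⟨a, ha⟩ := hA
  obtain ⟨b, hb⟩ := (Set.ne_univ_iff_exists_notMem A).mp hAne
  obtain ⟨d, -, hd, hd'⟩ := (hG.preconnected a b).some.exists_boundary_dart A ha hb
  exact ⟨d.fst, hd, d.snd, hd', d.adj⟩

theorem ncard_crossingPairs_le_ncard_cutEdges [Finite V] (A : Set V) :
    {p : V × V | p.1 ∈ A ∧ p.2 ∉ A ∧ G.Adj p.1 p.2}.ncard ≤ (G.cutEdges A).ncard := by
  refine Set.ncard_le_ncard_of_injOn (fun p => s(p.1, p.2)) ?_ ?_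
  · rintro ⟨x, y⟩ ⟨hx, hy, hxy⟩
    exact ⟨hxy, x, hx, y, hy, rfl⟩
  · rintro ⟨x, y⟩ ⟨hx, -⟩ ⟨x', y'⟩ ⟨-, hy', -⟩ h
    rcases Sym2.eq_iff.mp h with ⟨rfl, rfl⟩ | ⟨rfl, -⟩
    · rfl
    · exact absurd hx hy'

theorem ncard_neighborSet_le_ncard_cutEdges [Finite V] {A : Set V} {v : V} (hv : v ∈ A)
    (h : ∀ u, G.Adj v u → u ∈ A → ∃ w ∉ A, G.Adj u w) :
    (G.neighborSet v).ncard ≤ (G.cutEdges A).ncard := by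
  classical
  choose! out hout_notMem hout_adj using h
  let f : V → V × V := fun u => if u ∈ A then (u, out u) else (v, u)
  refine le_trans (Set.ncard_le_ncard_of_injOn f ?_ ?_) (ncard_crossingPairs_le_ncard_cutEdges A)
  · intro u (hvu : G.Adj v u)
    by_cases hu : u ∈ A
    · simpa [f, hu] using ⟨hout_notMem u hvu hu, hout_adj u hvu hu⟩
    · simpa [f, hu] using ⟨hv, hvu⟩
  · intro u (hvu : G.Adj v u) u' (hvu' : G.Adj v u') hf
    by_cases hu : u ∈ A <;> by_cases hu' : u' ∈ A <;> simp only [f, hu, hu', if_true, if_false,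
      Prod.mk.injEq] at hf
    · exact hf.1
    · obtain ⟨rfl, -⟩ := hf
      exact absurd hvu G.irrefl
    · obtain ⟨rfl, -⟩ := hf
      exact absurd hvu' G.irrefl
    · exact hf.2

theorem nonempty_pathGraph_four_embedding {a b c d : V} (hab : G.Adj a b) (hbc : G.Adj b c)
    (hcd : G.Adj c d) (hac : ¬ G.Adj a c) (hbd : ¬ G.Adj b d) (had : ¬ G.Adj a d) :
    Nonempty (pathGraph 4 ↪g G) := by
  have := hab.ne; have := hbc.ne; have := hcd.ne
  have : a ≠ c := by rintro rfl; exact had hcd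
  have : b ≠ d := by rintro rfl; exact had hab
  have : a ≠ d := by rintro rfl; exact hac hcd.symm
  refine ⟨⟨⟨![a, b, c, d], fun i j hij => ?_⟩, fun {i j} => ?_⟩⟩
  · fin_cases i <;> fin_cases j <;> simp_all
  · show G.Adj (![a, b, c, d] i) (![a, b, c, d] j) ↔ _
    fin_cases i <;> fin_cases j <;> simp_all [pathGraph_adj, G.adj_comm]

end SimpleGraph

theorem minDeg_le {V : Type*} [Fintype V] (G : SimpleGraph V) (v : V) :
    minDeg G ≤ (G.neighborSet v).ncard :=
  Nat.sInf_le ⟨v, rfl⟩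

theorem p4_free_edge_cut_ge_minDeg_general {V : Type*} [Fintype V] (G : SimpleGraph V)
    (hG : G.Connected)
    (hfree : IsEmpty (pathGraph 4 ↪g G))
    (A : Set V) (hA : A.Nonempty) (hAne : A ≠ Set.univ) :
    minDeg G ≤ ({e ∈ G.edgeSet | ∃ x ∈ A, ∃ y ∉ A, e = s(x, y)} : Set (Sym2 V)).ncard := by
  change minDeg G ≤ (G.cutEdges A).ncard
  obtain ⟨x, hx, y, hy, hxy⟩ := hG.exists_adj_mem_notMem hA hAne
  by_cases hxA : ∀ u, G.Adj x u → u ∈ A → ∃ w ∉ A, G.Adj u w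
  · exact (minDeg_le G x).trans (ncard_neighborSet_le_ncard_cutEdges hx hxA)
  by_cases hyA : ∀ u, G.Adj y u → u ∈ Aᶜ → ∃ w ∉ Aᶜ, G.Adj u w
  · rw [← cutEdges_compl]
    exact (minDeg_le G y).trans (ncard_neighborSet_le_ncard_cutEdges hy hyA)
  push Not at hxA hyA
  obtain ⟨x', hxx', hx'A, hx'⟩ := hxA
  obtain ⟨y', hyy', hy'A, hy'⟩ := hyA
  exact hfree.elim (nonempty_pathGraph_four_embedding hxx'.symm hxy hyy' (hx' y hy)
    (fun h => hy' x (not_not.mpr hx) h.symm) (hx' y' hy'A)).some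

/-- In a connected `P₄`-free graph on at least 2 vertices, every edge cut associated with a
nonempty proper vertex subset `A` has at least `δ(G)` edges. -/
theorem p4_free_edge_cut_ge_minDeg {V : Type*} [Fintype V] (G : SimpleGraph V)
    (hG : G.Connected) (hcard : 2 ≤ Fintype.card V)
    (hfree : IsEmpty (pathGraph 4 ↪g G))
    (A : Set V) (hA : A.Nonempty) (hAne : A ≠ Set.univ) :
    minDeg G ≤ ({e ∈ G.edgeSet | ∃ x ∈ A, ∃ y ∉ A, e = s(x, y)} : Set (Sym2 V)).ncard :=
  p4_free_edge_cut_ge_minDeg_general G hG hfree A hA hAne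
end
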